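/- arXiv:1905.01930 — 2 statements merged into one kernel-verified Lean document; each statement's English description precedes it below -/
import Mathlib

section
/- Potential vorticity conservation: if the one-form v·dx satisfies (∂_t + L_U)(v·dx) = dλ − μ db and b satisfies (∂_t + L_U) b = 0, and D d^3x satisfies (∂_t + L_U)(D d^3x) = 0 with D > 0, then q := D^{-1} ∇b · curl v satisfies ∂_t q + U·∇q = 0. -/
open scoped BigOperators
open MeasureTheory

noncomputable section

/-- Points of physical space `ℝ³`. -/
abbrev V3 : Type := Fin 3 → ℝ

/-- `i`-th partial derivative of a scalar field. -/
noncomputable def pd (i : Fin 3) (f : V3 → ℝ) (x : V3) : ℝ :=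
  fderiv ℝ f x (Pi.single i 1)

/-- Euclidean dot product on `ℝ³`. -/
def dot3 (a b : V3) : ℝ := ∑ i, a i * b i

/-- Cross product on `ℝ³`. -/
def cross3 (a b : V3) : V3 :=
  ![a 1 * b 2 - a 2 * b 1, a 2 * b 0 - a 0 * b 2, a 0 * b 1 - a 1 * b 0]

/-- Curl of a vector field on `ℝ³`. -/
noncomputable def curl3 (u : V3 → V3) (x : V3) : V3 :=
  ![pd 1 (fun y => u y 2) x - pd 2 (fun y => u y 1) x,
    pd 2 (fun y => u y 0) x - pd 0 (fun y => u y 2) x,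
    pd 0 (fun y => u y 1) x - pd 1 (fun y => u y 0) x]

/-- Gradient of a scalar field on `ℝ³`. -/
noncomputable def grad3 (f : V3 → ℝ) (x : V3) : V3 := fun i => pd i f x

end


/-! ### Auxiliary machinery: directional derivatives on space-time -/

abbrev P2 : Type := ℝ × V3

/-- Directional derivative of a scalar field on space-time. -/
noncomputable def Dd (a : P2) (f : P2 → ℝ) : P2 → ℝ := fun p => fderiv ℝ f p a

def Et : P2 := (1, 0)
def Ex (i : Fin 3) : P2 := (0, Pi.single i 1)

@[fun_prop]
lemma Dd_contDiff {f : P2 → ℝ} (hf : ContDiff ℝ (⊤ : ℕ∞) f) (a : P2) : ContDiff ℝ (⊤ : ℕ∞) (Dd a f) :=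
  (hf.fderiv_right (by simp)).clm_apply contDiff_const

@[fun_prop]
lemma Dd_differentiable {f : P2 → ℝ} (hf : ContDiff ℝ (⊤ : ℕ∞) f) (a : P2) :
    Differentiable ℝ (Dd a f) := (Dd_contDiff hf a).differentiable (by simp)

lemma Dd_comm {f : P2 → ℝ} (hf : ContDiff ℝ (⊤ : ℕ∞) f) (a c : P2) (p : P2) :
    Dd a (Dd c f) p = Dd c (Dd a f) p := by
  have hdf : ∀ y, HasFDerivAt f (fderiv ℝ f y) y := fun y =>
    (hf.differentiable (by simp) y).hasFDerivAt
  have hd2 : HasFDerivAt (fderiv ℝ f) (fderiv ℝ (fderiv ℝ f) p) p :=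
    (((hf.fderiv_right (m := (⊤ : ℕ∞)) (by simp)).differentiable (by simp)) p).hasFDerivAt
  have key := second_derivative_symmetric hdf hd2 a c
  have expand : ∀ w z : P2, Dd w (Dd z f) p = fderiv ℝ (fderiv ℝ f) p w z := by
    intro w z
    have hz : Dd z f = fun q => (fderiv ℝ f q) z := rfl
    simp only [Dd, hz]
    rw [fderiv_clm_apply ((hf.fderiv_right (m := (⊤ : ℕ∞)) (by simp)).differentiable (by simp) p)
      (differentiableAt_const z)]
    simp
  rw [expand, expand, key]

section DdLems
variable {f g : P2 → ℝ} {a : P2} {p : P2}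

lemma Dd_add (hf : DifferentiableAt ℝ f p) (hg : DifferentiableAt ℝ g p) :
    Dd a (fun q => f q + g q) p = Dd a f p + Dd a g p := by
  simp [Dd, fderiv_fun_add hf hg]

lemma Dd_sub (hf : DifferentiableAt ℝ f p) (hg : DifferentiableAt ℝ g p) :
    Dd a (fun q => f q - g q) p = Dd a f p - Dd a g p := by
  simp [Dd, fderiv_fun_sub hf hg]

lemma Dd_mul (hf : DifferentiableAt ℝ f p) (hg : DifferentiableAt ℝ g p) :
    Dd a (fun q => f q * g q) p = f p * Dd a g p + Dd a f p * g p := by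
  simp [Dd, fderiv_fun_mul hf hg, mul_comm]

lemma Dd_inv (hg : DifferentiableAt ℝ g p) (h0 : g p ≠ 0) :
    Dd a (fun q => (g q)⁻¹) p = -(Dd a g p) / g p ^ 2 := by
  have hcomp : (fun q => (g q)⁻¹) = (fun x : ℝ => x⁻¹) ∘ g := rfl
  simp only [Dd, hcomp]
  rw [fderiv_comp p (differentiableAt_inv h0) hg]
  simp [fderiv_inv]
  ring

lemma Dd_div (hf : DifferentiableAt ℝ f p) (hg : DifferentiableAt ℝ g p) (h0 : g p ≠ 0) :
    Dd a (fun q => f q / g q) p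
      = (Dd a f p * g p - f p * Dd a g p) / (g p ^ 2) := by
  have h : (fun q => f q / g q) = fun q => f q * (g q)⁻¹ := by
    funext q; rw [div_eq_mul_inv]
  rw [h, Dd_mul (g := fun q => (g q)⁻¹) hf (hg.inv h0), Dd_inv hg h0]
  field_simp
  ring

end DdLems

lemma pd_eq {G : P2 → ℝ} (t : ℝ) (x : V3) (i : Fin 3) (hG : DifferentiableAt ℝ G (t, x)) :
    pd i (fun y => G (t, y)) x = Dd (Ex i) G (t, x) := by
  have h1 : HasFDerivAt (fun y : V3 => (t, y))
      (ContinuousLinearMap.inr ℝ ℝ V3) x := hasFDerivAt_prodMk_right t x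
  have h2 := (hG.hasFDerivAt.comp x h1)
  have h3 : (fun y => G (t, y)) = G ∘ Prod.mk t := rfl
  simp only [pd, Dd, h3, h2.fderiv]
  simp [Ex]

lemma derivt_eq {G : P2 → ℝ} (t : ℝ) (x : V3) (hG : DifferentiableAt ℝ G (t, x)) :
    deriv (fun s => G (s, x)) t = Dd Et G (t, x) := by
  have h1 : HasFDerivAt (fun s : ℝ => (s, x))
      (ContinuousLinearMap.inl ℝ ℝ V3) t := hasFDerivAt_prodMk_left t x
  have h2 := (hG.hasFDerivAt.comp t h1)
  have h3 : (fun s => G (s, x)) = G ∘ fun s => (s, x) := rfl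
  rw [h3, h2.hasDerivAt.deriv]
  simp [Dd, Et]

/-- A scalar field as a function on space-time. -/
def fT (f : ℝ → V3 → ℝ) : P2 → ℝ := fun p => f p.1 p.2

/-- A component of a vector field as a function on space-time. -/
def fV (v : ℝ → V3 → V3) (i : Fin 3) : P2 → ℝ := fun p => v p.1 p.2 i

@[fun_prop]
lemma fT_differentiable {f : ℝ → V3 → ℝ} (hf : ContDiff ℝ (⊤ : ℕ∞) (fT f)) :
    Differentiable ℝ (fT f) := hf.differentiable (by simp)

@[fun_prop]
lemma fV_differentiable {w : ℝ → V3 → V3} {i : Fin 3} (hf : ContDiff ℝ (⊤ : ℕ∞) (fV w i)) :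
    Differentiable ℝ (fV w i) := hf.differentiable (by simp)

/-- The potential vorticity density `∇b · curl v` on space-time. -/
noncomputable def qn (b : ℝ → V3 → ℝ) (v : ℝ → V3 → V3) : P2 → ℝ := fun p =>
    Dd (Ex 0) (fT b) p * (Dd (Ex 1) (fV v 2) p - Dd (Ex 2) (fV v 1) p)
  + Dd (Ex 1) (fT b) p * (Dd (Ex 2) (fV v 0) p - Dd (Ex 0) (fV v 2) p)
  + Dd (Ex 2) (fT b) p * (Dd (Ex 0) (fV v 1) p - Dd (Ex 1) (fV v 0) p)

lemma Dd_qn {b : ℝ → V3 → ℝ} {v : ℝ → V3 → V3}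
    (hb : ContDiff ℝ (⊤ : ℕ∞) (fT b)) (hv : ∀ i, ContDiff ℝ (⊤ : ℕ∞) (fV v i)) (a p : P2) :
    Dd a (qn b v) p =
      Dd a (Dd (Ex 0) (fT b)) p * (Dd (Ex 1) (fV v 2) p - Dd (Ex 2) (fV v 1) p)
    + Dd (Ex 0) (fT b) p * (Dd a (Dd (Ex 1) (fV v 2)) p - Dd a (Dd (Ex 2) (fV v 1)) p)
    + Dd a (Dd (Ex 1) (fT b)) p * (Dd (Ex 2) (fV v 0) p - Dd (Ex 0) (fV v 2) p)
    + Dd (Ex 1) (fT b) p * (Dd a (Dd (Ex 2) (fV v 0)) p - Dd a (Dd (Ex 0) (fV v 2)) p)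
    + Dd a (Dd (Ex 2) (fT b)) p * (Dd (Ex 0) (fV v 1) p - Dd (Ex 1) (fV v 0) p)
    + Dd (Ex 2) (fT b) p * (Dd a (Dd (Ex 0) (fV v 1)) p - Dd a (Dd (Ex 1) (fV v 0)) p) := by
  have h0 := hv 0; have h1 := hv 1; have h2 := hv 2
  unfold qn
  rw [Dd_add (by fun_prop) (by fun_prop), Dd_add (by fun_prop) (by fun_prop),
      Dd_mul (by fun_prop) (by fun_prop), Dd_mul (by fun_prop) (by fun_prop),
      Dd_mul (by fun_prop) (by fun_prop),
      Dd_sub (by fun_prop) (by fun_prop), Dd_sub (by fun_prop) (by fun_prop),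
      Dd_sub (by fun_prop) (by fun_prop)]
  ring

set_option maxHeartbeats 2000000 in
/-- Potential vorticity conservation: if `(∂_t + L_U)(v·dx) = dλ − μ db`,
`(∂_t + L_U) b = 0` and `(∂_t + L_U)(D d³x) = 0` with `D > 0`, then the potential
vorticity `q = D⁻¹ ∇b · curl v` satisfies `∂_t q + U·∇q = 0`. -/
theorem potential_vorticity_conservation
    (U v : ℝ → V3 → V3) (b lam mu D : ℝ → V3 → ℝ)
    (hU : ContDiff ℝ (⊤ : ℕ∞) (fun p : ℝ × V3 => U p.1 p.2))
    (hv : ContDiff ℝ (⊤ : ℕ∞) (fun p : ℝ × V3 => v p.1 p.2))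
    (hb : ContDiff ℝ (⊤ : ℕ∞) (fun p : ℝ × V3 => b p.1 p.2))
    (hlam : ContDiff ℝ (⊤ : ℕ∞) (fun p : ℝ × V3 => lam p.1 p.2))
    (hmu : ContDiff ℝ (⊤ : ℕ∞) (fun p : ℝ × V3 => mu p.1 p.2))
    (hD : ContDiff ℝ (⊤ : ℕ∞) (fun p : ℝ × V3 => D p.1 p.2))
    (hpos : ∀ (t : ℝ) (x : V3), 0 < D t x)
    (hveq : ∀ (t : ℝ) (x : V3) (i : Fin 3),
      deriv (fun s => v s x i) t
        + (∑ k, U t x k * pd k (fun y => v t y i) x)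
        + (∑ k, v t x k * pd i (fun y => U t y k) x)
      = pd i (lam t) x - mu t x * pd i (b t) x)
    (hbeq : ∀ (t : ℝ) (x : V3),
      deriv (fun s => b s x) t + ∑ k, U t x k * pd k (b t) x = 0)
    (hDeq : ∀ (t : ℝ) (x : V3),
      deriv (fun s => D s x) t + ∑ k, pd k (fun y => D t y * U t y k) x = 0)
    (t : ℝ) (x : V3) :
    deriv (fun s => dot3 (grad3 (b s) x) (curl3 (v s) x) / D s x) t
      + ∑ k, U t x k *
          pd k (fun y => dot3 (grad3 (b t) y) (curl3 (v t) y) / D t y) x = 0 := by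
  -- smoothness of the space-time fields
  have hbT : ContDiff ℝ (⊤ : ℕ∞) (fT b) := hb
  have hlT : ContDiff ℝ (⊤ : ℕ∞) (fT lam) := hlam
  have hmT : ContDiff ℝ (⊤ : ℕ∞) (fT mu) := hmu
  have hDT : ContDiff ℝ (⊤ : ℕ∞) (fT D) := hD
  have hU0 : ContDiff ℝ (⊤ : ℕ∞) (fV U 0) := contDiff_pi.1 hU 0
  have hU1 : ContDiff ℝ (⊤ : ℕ∞) (fV U 1) := contDiff_pi.1 hU 1
  have hU2 : ContDiff ℝ (⊤ : ℕ∞) (fV U 2) := contDiff_pi.1 hU 2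
  have hv0 : ContDiff ℝ (⊤ : ℕ∞) (fV v 0) := contDiff_pi.1 hv 0
  have hv1 : ContDiff ℝ (⊤ : ℕ∞) (fV v 1) := contDiff_pi.1 hv 1
  have hv2 : ContDiff ℝ (⊤ : ℕ∞) (fV v 2) := contDiff_pi.1 hv 2
  have hvV : ∀ i, ContDiff ℝ (⊤ : ℕ∞) (fV v i) := by
    intro i; fin_cases i <;> assumption
  have hUV : ∀ i, ContDiff ℝ (⊤ : ℕ∞) (fV U i) := by
    intro i; fin_cases i <;> assumption
  have hqnC : ContDiff ℝ (⊤ : ℕ∞) (qn b v) := by unfold qn; fun_prop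
  have hD0 : ∀ p : P2, fT D p ≠ 0 := fun p => ne_of_gt (hpos p.1 p.2)
  -- conversion of pointwise derivatives to space-time directional derivatives
  have pdb : ∀ (s : ℝ) (y : V3) (i : Fin 3), pd i (b s) y = Dd (Ex i) (fT b) (s, y) :=
    fun s y i => pd_eq s y i (hbT.differentiable (by simp) _)
  have pdv : ∀ (s : ℝ) (y : V3) (j i : Fin 3),
      pd j (fun y' => v s y' i) y = Dd (Ex j) (fV v i) (s, y) :=
    fun s y j i => pd_eq s y j ((hvV i).differentiable (by simp) _)
  have pdU : ∀ (s : ℝ) (y : V3) (j k : Fin 3),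
      pd j (fun y' => U s y' k) y = Dd (Ex j) (fV U k) (s, y) :=
    fun s y j k => pd_eq s y j ((hUV k).differentiable (by simp) _)
  have pdl : ∀ (s : ℝ) (y : V3) (i : Fin 3), pd i (lam s) y = Dd (Ex i) (fT lam) (s, y) :=
    fun s y i => pd_eq s y i (hlT.differentiable (by simp) _)
  have pdDU : ∀ (s : ℝ) (y : V3) (k : Fin 3),
      pd k (fun y' => D s y' * U s y' k) y
        = Dd (Ex k) (fun q => fT D q * fV U k q) (s, y) := by
    intro s y k
    exact pd_eq (G := fun q => fT D q * fV U k q) s y k (by have := hUV k; fun_prop)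
  have dtb : ∀ (s : ℝ) (y : V3), deriv (fun r => b r y) s = Dd Et (fT b) (s, y) :=
    fun s y => derivt_eq s y (hbT.differentiable (by simp) _)
  have dtv : ∀ (s : ℝ) (y : V3) (i : Fin 3),
      deriv (fun r => v r y i) s = Dd Et (fV v i) (s, y) :=
    fun s y i => derivt_eq s y ((hvV i).differentiable (by simp) _)
  have dtD : ∀ (s : ℝ) (y : V3), deriv (fun r => D r y) s = Dd Et (fT D) (s, y) :=
    fun s y => derivt_eq s y (hDT.differentiable (by simp) _)
  -- hypotheses as identities of functions on space-time
  have HB : ∀ p : P2, Dd Et (fT b) p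
      + (fV U 0 p * Dd (Ex 0) (fT b) p + fV U 1 p * Dd (Ex 1) (fT b) p
        + fV U 2 p * Dd (Ex 2) (fT b) p) = 0 := by
    rintro ⟨s, y⟩
    have h := hbeq s y
    rw [Fin.sum_univ_three] at h
    rw [dtb, pdb, pdb, pdb] at h
    exact h
  have HV : ∀ (i : Fin 3) (p : P2), Dd Et (fV v i) p
      + (fV U 0 p * Dd (Ex 0) (fV v i) p + fV U 1 p * Dd (Ex 1) (fV v i) p
        + fV U 2 p * Dd (Ex 2) (fV v i) p)
      + (fV v 0 p * Dd (Ex i) (fV U 0) p + fV v 1 p * Dd (Ex i) (fV U 1) p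
        + fV v 2 p * Dd (Ex i) (fV U 2) p)
      = Dd (Ex i) (fT lam) p - fT mu p * Dd (Ex i) (fT b) p := by
    rintro i ⟨s, y⟩
    have h := hveq s y i
    rw [Fin.sum_univ_three, Fin.sum_univ_three] at h
    rw [dtv, pdv, pdv, pdv, pdU, pdU, pdU, pdl, pdb] at h
    exact h
  have HD : ∀ p : P2, Dd Et (fT D) p
      + ((fT D p * Dd (Ex 0) (fV U 0) p + Dd (Ex 0) (fT D) p * fV U 0 p)
        + (fT D p * Dd (Ex 1) (fV U 1) p + Dd (Ex 1) (fT D) p * fV U 1 p)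
        + (fT D p * Dd (Ex 2) (fV U 2) p + Dd (Ex 2) (fT D) p * fV U 2 p)) = 0 := by
    rintro ⟨s, y⟩
    have h := hDeq s y
    rw [Fin.sum_univ_three] at h
    rw [dtD, pdDU, pdDU, pdDU] at h
    rw [Dd_mul (by fun_prop) (by fun_prop), Dd_mul (by fun_prop) (by fun_prop),
        Dd_mul (by fun_prop) (by fun_prop)] at h
    exact h
  -- solved form of the density equation
  have SD : Dd Et (fT D) (t, x)
      = -((fT D (t, x) * Dd (Ex 0) (fV U 0) (t, x) + Dd (Ex 0) (fT D) (t, x) * fV U 0 (t, x))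
        + (fT D (t, x) * Dd (Ex 1) (fV U 1) (t, x) + Dd (Ex 1) (fT D) (t, x) * fV U 1 (t, x))
        + (fT D (t, x) * Dd (Ex 2) (fV U 2) (t, x) + Dd (Ex 2) (fT D) (t, x) * fV U 2 (t, x))) := by
    linear_combination HD (t, x)
  -- differentiated and solved form of the b-equation
  have Sb : ∀ (j : Fin 3) (p : P2), Dd (Ex j) (Dd Et (fT b)) p
      = -((fV U 0 p * Dd (Ex j) (Dd (Ex 0) (fT b)) p + Dd (Ex j) (fV U 0) p * Dd (Ex 0) (fT b) p)
        + (fV U 1 p * Dd (Ex j) (Dd (Ex 1) (fT b)) p + Dd (Ex j) (fV U 1) p * Dd (Ex 1) (fT b) p)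
        + (fV U 2 p * Dd (Ex j) (Dd (Ex 2) (fT b)) p + Dd (Ex j) (fV U 2) p * Dd (Ex 2) (fT b) p)) := by
    intro j p
    have hfun : (fun q : P2 => Dd Et (fT b) q
        + (fV U 0 q * Dd (Ex 0) (fT b) q + fV U 1 q * Dd (Ex 1) (fT b) q
          + fV U 2 q * Dd (Ex 2) (fT b) q)) = (fun _ : P2 => (0 : ℝ)) := funext HB
    have hz : Dd (Ex j) (fun q : P2 => Dd Et (fT b) q
        + (fV U 0 q * Dd (Ex 0) (fT b) q + fV U 1 q * Dd (Ex 1) (fT b) q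
          + fV U 2 q * Dd (Ex 2) (fT b) q)) p = 0 := by
      rw [hfun]; simp [Dd]
    rw [Dd_add (by fun_prop) (by fun_prop), Dd_add (by fun_prop) (by fun_prop),
        Dd_add (by fun_prop) (by fun_prop), Dd_mul (by fun_prop) (by fun_prop),
        Dd_mul (by fun_prop) (by fun_prop), Dd_mul (by fun_prop) (by fun_prop)] at hz
    linear_combination hz
  -- differentiated and solved form of the v-equation
  have Sv : ∀ (i j : Fin 3) (p : P2), Dd (Ex j) (Dd Et (fV v i)) p
      = Dd (Ex j) (Dd (Ex i) (fT lam)) p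
        - (fT mu p * Dd (Ex j) (Dd (Ex i) (fT b)) p + Dd (Ex j) (fT mu) p * Dd (Ex i) (fT b) p)
        - ((fV U 0 p * Dd (Ex j) (Dd (Ex 0) (fV v i)) p
            + Dd (Ex j) (fV U 0) p * Dd (Ex 0) (fV v i) p)
          + (fV U 1 p * Dd (Ex j) (Dd (Ex 1) (fV v i)) p
            + Dd (Ex j) (fV U 1) p * Dd (Ex 1) (fV v i) p)
          + (fV U 2 p * Dd (Ex j) (Dd (Ex 2) (fV v i)) p
            + Dd (Ex j) (fV U 2) p * Dd (Ex 2) (fV v i) p))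
        - ((fV v 0 p * Dd (Ex j) (Dd (Ex i) (fV U 0)) p
            + Dd (Ex j) (fV v 0) p * Dd (Ex i) (fV U 0) p)
          + (fV v 1 p * Dd (Ex j) (Dd (Ex i) (fV U 1)) p
            + Dd (Ex j) (fV v 1) p * Dd (Ex i) (fV U 1) p)
          + (fV v 2 p * Dd (Ex j) (Dd (Ex i) (fV U 2)) p
            + Dd (Ex j) (fV v 2) p * Dd (Ex i) (fV U 2) p)) := by
    intro i j p
    have hvi := hvV i
    have HV0 : ∀ q : P2, Dd Et (fV v i) q
        + (fV U 0 q * Dd (Ex 0) (fV v i) q + fV U 1 q * Dd (Ex 1) (fV v i) q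
          + fV U 2 q * Dd (Ex 2) (fV v i) q)
        + (fV v 0 q * Dd (Ex i) (fV U 0) q + fV v 1 q * Dd (Ex i) (fV U 1) q
          + fV v 2 q * Dd (Ex i) (fV U 2) q)
        - (Dd (Ex i) (fT lam) q - fT mu q * Dd (Ex i) (fT b) q) = 0 :=
      fun q => sub_eq_zero.mpr (HV i q)
    have hfun : (fun q : P2 => Dd Et (fV v i) q
        + (fV U 0 q * Dd (Ex 0) (fV v i) q + fV U 1 q * Dd (Ex 1) (fV v i) q
          + fV U 2 q * Dd (Ex 2) (fV v i) q)
        + (fV v 0 q * Dd (Ex i) (fV U 0) q + fV v 1 q * Dd (Ex i) (fV U 1) q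
          + fV v 2 q * Dd (Ex i) (fV U 2) q)
        - (Dd (Ex i) (fT lam) q - fT mu q * Dd (Ex i) (fT b) q))
        = (fun _ : P2 => (0 : ℝ)) := funext HV0
    have hz : Dd (Ex j) (fun q : P2 => Dd Et (fV v i) q
        + (fV U 0 q * Dd (Ex 0) (fV v i) q + fV U 1 q * Dd (Ex 1) (fV v i) q
          + fV U 2 q * Dd (Ex 2) (fV v i) q)
        + (fV v 0 q * Dd (Ex i) (fV U 0) q + fV v 1 q * Dd (Ex i) (fV U 1) q
          + fV v 2 q * Dd (Ex i) (fV U 2) q)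
        - (Dd (Ex i) (fT lam) q - fT mu q * Dd (Ex i) (fT b) q)) p = 0 := by
      rw [hfun]; simp [Dd]
    rw [Dd_sub (by fun_prop) (by fun_prop), Dd_add (by fun_prop) (by fun_prop),
        Dd_add (by fun_prop) (by fun_prop),
        Dd_add (by fun_prop) (by fun_prop), Dd_add (by fun_prop) (by fun_prop),
        Dd_add (by fun_prop) (by fun_prop), Dd_add (by fun_prop) (by fun_prop),
        Dd_mul (by fun_prop) (by fun_prop), Dd_mul (by fun_prop) (by fun_prop),
        Dd_mul (by fun_prop) (by fun_prop), Dd_mul (by fun_prop) (by fun_prop),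
        Dd_mul (by fun_prop) (by fun_prop), Dd_mul (by fun_prop) (by fun_prop),
        Dd_sub (by fun_prop) (by fun_prop), Dd_mul (by fun_prop) (by fun_prop)] at hz
    linear_combination hz
  -- rewrite the goal in terms of space-time directional derivatives
  have keyfun : ∀ (s : ℝ) (y : V3),
      dot3 (grad3 (b s) y) (curl3 (v s) y) / D s y = qn b v (s, y) / fT D (s, y) := by
    intro s y
    unfold qn
    simp only [dot3, grad3, curl3, Fin.sum_univ_three, Matrix.cons_val_zero,
      Matrix.cons_val_one, Matrix.head_cons, Matrix.cons_val_two, Matrix.tail_cons,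
      pdb, pdv]
    rfl
  have hqnD : Differentiable ℝ (qn b v) := hqnC.differentiable (by simp)
  have hDd : Differentiable ℝ (fT D) := hDT.differentiable (by simp)
  have hQdiff : DifferentiableAt ℝ (fun p : P2 => qn b v p / fT D p) (t, x) := by
    rw [show (fun p : P2 => qn b v p / fT D p) = fun p => qn b v p * (fT D p)⁻¹ from
      funext fun p => div_eq_mul_inv _ _]
    exact (hqnD _).mul ((hDd _).inv (hD0 _))
  have e1 : deriv (fun s => qn b v (s, x) / fT D (s, x)) t
      = Dd Et (fun p : P2 => qn b v p / fT D p) (t, x) := derivt_eq t x hQdiff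
  have e2 : ∀ k : Fin 3, pd k (fun y => qn b v (t, y) / fT D (t, y)) x
      = Dd (Ex k) (fun p : P2 => qn b v p / fT D p) (t, x) :=
    fun k => pd_eq t x k hQdiff
  rw [show (fun s => dot3 (grad3 (b s) x) (curl3 (v s) x) / D s x)
      = (fun s => qn b v (s, x) / fT D (s, x)) from funext (fun s => keyfun s x)]
  rw [Fin.sum_univ_three]
  rw [show (fun y => dot3 (grad3 (b t) y) (curl3 (v t) y) / D t y)
      = (fun y => qn b v (t, y) / fT D (t, y)) from funext (fun y => keyfun t y)]
  rw [e1, e2 0, e2 1, e2 2]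
  -- expand the quotient and the derivatives of qn
  have e3 : ∀ a : P2, Dd a (fun p : P2 => qn b v p / fT D p) (t, x)
      = (Dd a (qn b v) (t, x) * fT D (t, x) - qn b v (t, x) * Dd a (fT D) (t, x))
          / (fT D (t, x) ^ 2) :=
    fun a => Dd_div (hqnD _) (hDd _) (hD0 (t, x))
  rw [e3 Et, e3 (Ex 0), e3 (Ex 1), e3 (Ex 2)]
  have e4 : ∀ a : P2, Dd a (qn b v) (t, x) = _ := fun a => Dd_qn hbT hvV a (t, x)
  simp only [e4]
  unfold qn
  -- flip time and space derivatives
  have flipb : ∀ (i : Fin 3) (p : P2),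
      Dd Et (Dd (Ex i) (fT b)) p = Dd (Ex i) (Dd Et (fT b)) p :=
    fun i p => Dd_comm hbT Et (Ex i) p
  have flipv : ∀ (k i : Fin 3) (p : P2),
      Dd Et (Dd (Ex i) (fV v k)) p = Dd (Ex i) (Dd Et (fV v k)) p :=
    fun k i p => Dd_comm (hvV k) Et (Ex i) p
  simp only [flipb, flipv]
  -- substitute the evolution equations
  simp only [Sb, Sv, SD]
  -- canonicalize spatial second derivatives
  have symb : ∀ (i j : Fin 3) (p : P2),
      Dd (Ex i) (Dd (Ex j) (fT b)) p = Dd (Ex j) (Dd (Ex i) (fT b)) p :=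
    fun i j p => Dd_comm hbT (Ex i) (Ex j) p
  have syml : ∀ (i j : Fin 3) (p : P2),
      Dd (Ex i) (Dd (Ex j) (fT lam)) p = Dd (Ex j) (Dd (Ex i) (fT lam)) p :=
    fun i j p => Dd_comm hlT (Ex i) (Ex j) p
  have symv : ∀ (k : Fin 3) (i j : Fin 3) (p : P2),
      Dd (Ex i) (Dd (Ex j) (fV v k)) p = Dd (Ex j) (Dd (Ex i) (fV v k)) p :=
    fun k i j p => Dd_comm (hvV k) (Ex i) (Ex j) p
  have symU : ∀ (k : Fin 3) (i j : Fin 3) (p : P2),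
      Dd (Ex i) (Dd (Ex j) (fV U k)) p = Dd (Ex j) (Dd (Ex i) (fV U k)) p :=
    fun k i j p => Dd_comm (hUV k) (Ex i) (Ex j) p
  simp only [symb 1 0, symb 2 0, symb 2 1, syml 1 0, syml 2 0, syml 2 1,
    symv 0 1 0, symv 0 2 0, symv 0 2 1, symv 1 1 0, symv 1 2 0, symv 1 2 1,
    symv 2 1 0, symv 2 2 0, symv 2 2 1,
    symU 0 1 0, symU 0 2 0, symU 0 2 1, symU 1 1 0, symU 1 2 0, symU 1 2 1,
    symU 2 1 0, symU 2 2 0, symU 2 2 1]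
  -- normalize the point values
  have n1 : ∀ k : Fin 3, fV U k (t, x) = U t x k := fun _ => rfl
  have n2 : ∀ k : Fin 3, fV v k (t, x) = v t x k := fun _ => rfl
  have n3 : fT mu (t, x) = mu t x := rfl
  have n4 : fT D (t, x) = D t x := rfl
  simp only [n1, n2, n3, n4]
  have hDx : D t x ≠ 0 := ne_of_gt (hpos t x)
  field_simp
  ring
end

section
/- Kelvin circulation derivative formula: for a closed loop c_t = φ_t ∘ c_0 transported by the flow φ_t of a smooth vector field U, and a smooth time-dependent one-form α_t, d/dt ∮_{c_t} α_t = ∮_{c_t} (∂_t α_t + L_U α_t); in particular if (∂_t + L_U)α = dλ for a smooth function λ, the circulation ∮_{c_t} α_t is constant in time. -/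
open scoped BigOperators
open MeasureTheory

noncomputable section KelvinAuxSec
namespace KelvinAux

/-- joint map for a time-dependent vector field -/
def Am (α : ℝ → V3 → V3) : ℝ × V3 → V3 := fun q => α q.1 q.2

/-- joint map for a time-dependent scalar field -/
def Lm (lam : ℝ → V3 → ℝ) : ℝ × V3 → ℝ := fun q => lam q.1 q.2

/-- transported loop as a joint map -/
def Pm (φ : ℝ → V3 → V3) (c₀ : ℝ → V3) : ℝ × ℝ → V3 := fun q => φ q.1 (c₀ q.2)

/-- the circulation integrand, in `fderiv` form -/
def Fm (α φ : ℝ → V3 → V3) (c₀ : ℝ → V3) : ℝ → ℝ → ℝ := fun τ s =>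
  dot3 (α τ (φ τ (c₀ s))) (fderiv ℝ (Pm φ c₀) (τ, s) (0, 1))

/-- the time derivative of the circulation integrand, in `fderiv` form -/
def Gm (Uv α φ : ℝ → V3 → V3) (c₀ : ℝ → V3) : ℝ → ℝ → ℝ := fun τ s =>
  dot3 (fderiv ℝ (Am α) (τ, φ τ (c₀ s)) (1, Uv τ (φ τ (c₀ s))))
      (fderiv ℝ (Pm φ c₀) (τ, s) (0, 1))
    + dot3 (α τ (φ τ (c₀ s))) (fderiv ℝ (fderiv ℝ (Pm φ c₀)) (τ, s) (1, 0) (0, 1))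

lemma vec_expand (u : V3) : u = ∑ j, u j • (Pi.single j 1 : V3) := by
  funext k; simp [Finset.sum_apply, Pi.single_apply]

lemma prod_expand0 (u : V3) :
    ((0:ℝ), u) = ∑ j, u j • (((0:ℝ), Pi.single j 1) : ℝ × V3) := by
  rw [Prod.ext_iff]
  constructor
  · simp [Prod.fst_sum, Prod.smul_mk]
  · rw [Prod.snd_sum]
    simp only [Prod.smul_mk, smul_eq_mul]
    simpa using vec_expand u

lemma clm_expand0 (L : (ℝ × V3) →L[ℝ] V3) (u : V3) (i : Fin 3) :
    L (0, u) i = ∑ j, u j * L (0, Pi.single j 1) i := by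
  rw [prod_expand0 u, map_sum]
  simp only [_root_.map_smul]
  simp [Finset.sum_apply]

lemma clm_expand0' (L : (ℝ × V3) →L[ℝ] ℝ) (u : V3) :
    L (0, u) = ∑ j, u j * L (0, Pi.single j 1) := by
  rw [prod_expand0 u, map_sum]
  simp only [_root_.map_smul]
  simp

lemma clm_expand (L : (ℝ × V3) →L[ℝ] V3) (u : V3) (i : Fin 3) :
    L (1, u) i = L (1, 0) i + ∑ j, u j * L (0, Pi.single j 1) i := by
  have : ((1:ℝ), u) = ((1:ℝ), (0:V3)) + ((0:ℝ), u) := by simp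
  rw [this, map_add]
  simp only [Pi.add_apply]
  rw [clm_expand0]

lemma hasDerivAt_dot3 {f g : ℝ → V3} {f' g' : V3} {t : ℝ}
    (hf : HasDerivAt f f' t) (hg : HasDerivAt g g' t) :
    HasDerivAt (fun τ => dot3 (f τ) (g τ)) (dot3 f' (g t) + dot3 (f t) g') t := by
  simp only [dot3, ← Finset.sum_add_distrib]
  apply HasDerivAt.fun_sum
  intro i _
  exact ((hasDerivAt_pi.1 hf i).mul (hasDerivAt_pi.1 hg i))

lemma continuous_dot3 : Continuous (fun p : V3 × V3 => dot3 p.1 p.2) := by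
  unfold dot3
  fun_prop

section jointV
variable {W : ℝ × V3 → V3}

lemma hasDerivAt_time (hW : ContDiff ℝ (⊤ : ℕ∞) W) (t : ℝ) (x : V3) :
    HasDerivAt (fun τ => W (τ, x)) (fderiv ℝ W (t, x) (1, 0)) t :=
  ((hW.differentiable (by simp) (t, x)).hasFDerivAt).comp_hasDerivAt t
    ((hasDerivAt_id t).prodMk (hasDerivAt_const t x))

lemma deriv_time (hW : ContDiff ℝ (⊤ : ℕ∞) W) (t : ℝ) (x : V3) (i : Fin 3) :
    deriv (fun τ => W (τ, x) i) t = fderiv ℝ W (t, x) (1, 0) i :=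
  (hasDerivAt_pi.1 (hasDerivAt_time hW t x) i).deriv

lemma hasFDerivAt_space (hW : ContDiff ℝ (⊤ : ℕ∞) W) (t : ℝ) (x : V3) :
    HasFDerivAt (fun y => W (t, y))
      ((fderiv ℝ W (t, x)).comp (ContinuousLinearMap.inr ℝ ℝ V3)) x :=
  ((hW.differentiable (by simp) (t, x)).hasFDerivAt).comp x (hasFDerivAt_prodMk_right t x)

lemma pd_space (hW : ContDiff ℝ (⊤ : ℕ∞) W) (t : ℝ) (x : V3) (i j : Fin 3) :
    pd j (fun y => W (t, y) i) x = fderiv ℝ W (t, x) (0, Pi.single j 1) i := by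
  have h1 : HasFDerivAt (fun y => W (t, y) i)
      (((ContinuousLinearMap.proj i : V3 →L[ℝ] ℝ)).comp
        ((fderiv ℝ W (t, x)).comp (ContinuousLinearMap.inr ℝ ℝ V3))) x :=
    ((ContinuousLinearMap.proj i : V3 →L[ℝ] ℝ).hasFDerivAt).comp x (hasFDerivAt_space hW t x)
  rw [pd, h1.fderiv]
  rfl

lemma fderiv_time_apply (hW : ContDiff ℝ (⊤ : ℕ∞) W) (t : ℝ) (x : V3) (u : V3) (i : Fin 3) :
    fderiv ℝ W (t, x) (1, u) i
      = deriv (fun τ => W (τ, x) i) t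
        + ∑ j, u j * pd j (fun y => W (t, y) i) x := by
  rw [clm_expand, deriv_time hW t x i]
  congr 1
  refine Finset.sum_congr rfl fun j _ => ?_
  rw [pd_space hW t x i j]

lemma hasDerivAt_space_line (hW : ContDiff ℝ (⊤ : ℕ∞) W) (t : ℝ) {γ : ℝ → V3} {v : V3} {s : ℝ}
    (hγ : HasDerivAt γ v s) :
    HasDerivAt (fun r => W (t, γ r)) (fderiv ℝ W (t, γ s) (0, v)) s := by
  have := (hasFDerivAt_space hW t (γ s)).comp_hasDerivAt s hγ
  exact this

end jointV

section jointS
variable {W : ℝ × V3 → ℝ}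

lemma hasFDerivAt_space' (hW : ContDiff ℝ (⊤ : ℕ∞) W) (t : ℝ) (x : V3) :
    HasFDerivAt (fun y => W (t, y))
      ((fderiv ℝ W (t, x)).comp (ContinuousLinearMap.inr ℝ ℝ V3)) x :=
  ((hW.differentiable (by simp) (t, x)).hasFDerivAt).comp x (hasFDerivAt_prodMk_right t x)

lemma pd_space' (hW : ContDiff ℝ (⊤ : ℕ∞) W) (t : ℝ) (x : V3) (j : Fin 3) :
    pd j (fun y => W (t, y)) x = fderiv ℝ W (t, x) (0, Pi.single j 1) := by
  rw [pd, (hasFDerivAt_space' hW t x).fderiv]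
  rfl

lemma hasDerivAt_space_line' (hW : ContDiff ℝ (⊤ : ℕ∞) W) (t : ℝ) {γ : ℝ → V3} {v : V3} {s : ℝ}
    (hγ : HasDerivAt γ v s) :
    HasDerivAt (fun r => W (t, γ r)) (fderiv ℝ W (t, γ s) (0, v)) s := by
  have := (hasFDerivAt_space' hW t (γ s)).comp_hasDerivAt s hγ
  exact this

end jointS

section secondDeriv
variable {f : ℝ × ℝ → V3}

lemma fderiv_smooth (hf : ContDiff ℝ (⊤ : ℕ∞) f) : ContDiff ℝ (⊤ : ℕ∞) (fderiv ℝ f) :=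
  hf.fderiv_right (m := (⊤ : ℕ∞)) (by simp)

lemma hasDerivAt_fderiv_applied (hf : ContDiff ℝ (⊤ : ℕ∞) f) {γ : ℝ → ℝ × ℝ} {w : ℝ × ℝ} {τ0 : ℝ}
    (hγ : HasDerivAt γ w τ0) (v : ℝ × ℝ) :
    HasDerivAt (fun τ => fderiv ℝ f (γ τ) v)
      (fderiv ℝ (fderiv ℝ f) (γ τ0) w v) τ0 := by
  have h1 : HasDerivAt (fun τ => fderiv ℝ f (γ τ))
      (fderiv ℝ (fderiv ℝ f) (γ τ0) w) τ0 :=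
    (((fderiv_smooth hf).differentiable (by simp) (γ τ0)).hasFDerivAt).comp_hasDerivAt τ0 hγ
  exact ((ContinuousLinearMap.apply ℝ V3 v).hasFDerivAt).comp_hasDerivAt τ0 h1

lemma symm_second (hf : ContDiff ℝ (⊤ : ℕ∞) f) (p : ℝ × ℝ) (v w : ℝ × ℝ) :
    fderiv ℝ (fderiv ℝ f) p v w = fderiv ℝ (fderiv ℝ f) p w v :=
  (hf.contDiffAt.isSymmSndFDerivAt (by rw [minSmoothness_of_isRCLikeNormedField]; exact WithTop.coe_le_coe.mpr le_top)) v w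

lemma hasDerivAt_comp_line (hf : ContDiff ℝ (⊤ : ℕ∞) f) {γ : ℝ → ℝ × ℝ} {w : ℝ × ℝ} {τ0 : ℝ}
    (hγ : HasDerivAt γ w τ0) :
    HasDerivAt (fun τ => f (γ τ)) (fderiv ℝ f (γ τ0) w) τ0 :=
  ((hf.differentiable (by simp) (γ τ0)).hasFDerivAt).comp_hasDerivAt τ0 hγ

end secondDeriv

end KelvinAux
end KelvinAuxSec

noncomputable section

/-- Circulation of the time-dependent one-form `α_τ` around the transported loop
`c_τ = φ_τ ∘ c₀` (parameterized over `[0,1]`). -/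
noncomputable def circInt (α : ℝ → V3 → V3) (φ : ℝ → V3 → V3)
    (c₀ : ℝ → V3) (τ : ℝ) : ℝ :=
  ∫ s in (0 : ℝ)..1, dot3 (α τ (φ τ (c₀ s))) (deriv (fun r => φ τ (c₀ r)) s)

/-- Kelvin circulation theorem: for a closed loop `c_t = φ_t ∘ c₀`
transported by the flow `φ_t` of `U`, `d/dt ∮_{c_t} α_t = ∮_{c_t} (∂_t α_t + L_U α_t)`;
in particular, if `(∂_t + L_U)α = dλ` then the circulation is constant in time. -/
theorem kelvin_circulation (Uv α : ℝ → V3 → V3) (lam : ℝ → V3 → ℝ)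
    (φ : ℝ → V3 → V3) (c₀ : ℝ → V3)
    (hU : ContDiff ℝ (⊤ : ℕ∞) (fun q : ℝ × V3 => Uv q.1 q.2))
    (hα : ContDiff ℝ (⊤ : ℕ∞) (fun q : ℝ × V3 => α q.1 q.2))
    (hlam : ContDiff ℝ (⊤ : ℕ∞) (fun q : ℝ × V3 => lam q.1 q.2))
    (hφ : ContDiff ℝ (⊤ : ℕ∞) (fun q : ℝ × V3 => φ q.1 q.2))
    (hc : ContDiff ℝ (⊤ : ℕ∞) c₀)
    (hclosed : ∀ s : ℝ, c₀ (s + 1) = c₀ s)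
    (hφ0 : φ 0 = id)
    (hflow : ∀ (τ : ℝ) (x : V3), HasDerivAt (fun σ => φ σ x) (Uv τ (φ τ x)) τ) :
    (∀ t : ℝ,
      HasDerivAt (fun τ => circInt α φ c₀ τ)
        (∫ s in (0 : ℝ)..1,
          dot3
            (fun i : Fin 3 =>
              deriv (fun τ => α τ (φ t (c₀ s)) i) t
                + (∑ j, Uv t (φ t (c₀ s)) j * pd j (fun y => α t y i) (φ t (c₀ s)))
                + (∑ j, α t (φ t (c₀ s)) j * pd i (fun y => Uv t y j) (φ t (c₀ s))))
            (deriv (fun r => φ t (c₀ r)) s)) t)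
    ∧ ((∀ (t : ℝ) (x : V3) (i : Fin 3),
          deriv (fun τ => α τ x i) t
              + (∑ j, Uv t x j * pd j (fun y => α t y i) x)
              + (∑ j, α t x j * pd i (fun y => Uv t y j) x)
            = pd i (lam t) x) →
        ∀ t₁ t₂ : ℝ, circInt α φ c₀ t₁ = circInt α φ c₀ t₂) := by
  classical
  have hP : ContDiff ℝ (⊤ : ℕ∞) (KelvinAux.Pm φ c₀) :=
    hφ.comp (contDiff_fst.prodMk (hc.comp contDiff_snd))
  have hA : ContDiff ℝ (⊤ : ℕ∞) (KelvinAux.Am α) := hα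
  have hAU : ContDiff ℝ (⊤ : ℕ∞) (KelvinAux.Am Uv) := hU
  -- the tangent vector of the loop
  have hvecB : ∀ (τ s : ℝ),
      HasDerivAt (fun r => φ τ (c₀ r)) (fderiv ℝ (KelvinAux.Pm φ c₀) (τ, s) (0, 1)) s :=
    fun τ s =>
      KelvinAux.hasDerivAt_comp_line hP ((hasDerivAt_const s τ).prodMk (hasDerivAt_id s))
  have hderivB : ∀ (τ s : ℝ),
      deriv (fun r => φ τ (c₀ r)) s = fderiv ℝ (KelvinAux.Pm φ c₀) (τ, s) (0, 1) :=
    fun τ s => (hvecB τ s).deriv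
  -- expression of the circulation via `Fm`
  have hcirc_eq : circInt α φ c₀ = fun τ => ∫ s in (0:ℝ)..1, KelvinAux.Fm α φ c₀ τ s := by
    funext τ
    unfold circInt KelvinAux.Fm
    exact intervalIntegral.integral_congr fun s _ => by rw [hderivB]
  -- time derivative of the integrand
  have hFderiv : ∀ (s τ0 : ℝ),
      HasDerivAt (fun τ => KelvinAux.Fm α φ c₀ τ s) (KelvinAux.Gm Uv α φ c₀ τ0 s) τ0 := by
    intro s τ0
    have h1 : HasDerivAt (fun τ => α τ (φ τ (c₀ s)))
        (fderiv ℝ (KelvinAux.Am α) (τ0, φ τ0 (c₀ s)) (1, Uv τ0 (φ τ0 (c₀ s)))) τ0 :=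
      by have := ((hA.differentiable (by simp) (τ0, φ τ0 (c₀ s))).hasFDerivAt).comp_hasDerivAt τ0
          ((hasDerivAt_id τ0).prodMk (hflow τ0 (c₀ s))); exact this
    have h2 : HasDerivAt (fun τ => fderiv ℝ (KelvinAux.Pm φ c₀) (τ, s) (0, 1))
        (fderiv ℝ (fderiv ℝ (KelvinAux.Pm φ c₀)) (τ0, s) (1, 0) (0, 1)) τ0 :=
      KelvinAux.hasDerivAt_fderiv_applied hP
        ((hasDerivAt_id τ0).prodMk (hasDerivAt_const τ0 s)) (0, 1)
    exact KelvinAux.hasDerivAt_dot3 h1 h2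
  -- joint continuity facts
  have c1 : Continuous (fun p : ℝ × ℝ => ((p.1, φ p.1 (c₀ p.2)) : ℝ × V3)) :=
    continuous_fst.prodMk hP.continuous
  have capplyV : Continuous (fun p : ((ℝ × V3) →L[ℝ] V3) × (ℝ × V3) => p.1 p.2) :=
    isBoundedBilinearMap_apply.continuous
  have capplyP : Continuous (fun p : ((ℝ × ℝ) →L[ℝ] V3) × (ℝ × ℝ) => p.1 p.2) :=
    isBoundedBilinearMap_apply.continuous
  have capplyPP :
      Continuous (fun p : ((ℝ × ℝ) →L[ℝ] ((ℝ × ℝ) →L[ℝ] V3)) × (ℝ × ℝ) => p.1 p.2) :=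
    isBoundedBilinearMap_apply.continuous
  have cDA : Continuous (fderiv ℝ (KelvinAux.Am α)) :=
    (hA.fderiv_right (m := (⊤ : ℕ∞)) (by simp)).continuous
  have cDP : Continuous (fderiv ℝ (KelvinAux.Pm φ c₀)) :=
    (hP.fderiv_right (m := (⊤ : ℕ∞)) (by simp)).continuous
  have cDDP : Continuous (fderiv ℝ (fderiv ℝ (KelvinAux.Pm φ c₀))) :=
    ((hP.fderiv_right (m := (⊤ : ℕ∞)) (by simp)).fderiv_right (m := (⊤ : ℕ∞)) (by simp)).continuous
  have cB : Continuous (fun p : ℝ × ℝ => fderiv ℝ (KelvinAux.Pm φ c₀) p (0, 1)) :=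
    capplyP.comp (cDP.prodMk continuous_const)
  have cU : Continuous (fun p : ℝ × ℝ => Uv p.1 (φ p.1 (c₀ p.2))) :=
    hAU.continuous.comp c1
  have cαP : Continuous (fun p : ℝ × ℝ => α p.1 (φ p.1 (c₀ p.2))) :=
    hA.continuous.comp c1
  have cT1 : Continuous (fun p : ℝ × ℝ =>
      fderiv ℝ (KelvinAux.Am α) (p.1, φ p.1 (c₀ p.2)) (1, Uv p.1 (φ p.1 (c₀ p.2)))) :=
    capplyV.comp ((cDA.comp c1).prodMk (continuous_const.prodMk cU))
  have cT2 : Continuous (fun p : ℝ × ℝ =>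
      fderiv ℝ (fderiv ℝ (KelvinAux.Pm φ c₀)) p (1, 0) (0, 1)) :=
    capplyP.comp ((capplyPP.comp (cDDP.prodMk continuous_const)).prodMk continuous_const)
  have hGcont : Continuous (fun p : ℝ × ℝ => KelvinAux.Gm Uv α φ c₀ p.1 p.2) := by
    unfold KelvinAux.Gm
    exact (KelvinAux.continuous_dot3.comp (cT1.prodMk cB)).add
      (KelvinAux.continuous_dot3.comp (cαP.prodMk cT2))
  have hFcont : Continuous (fun p : ℝ × ℝ => KelvinAux.Fm α φ c₀ p.1 p.2) := by
    unfold KelvinAux.Fm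
    exact KelvinAux.continuous_dot3.comp (cαP.prodMk cB)
  -- derivative of the parametrized integral
  have hmain : ∀ t : ℝ,
      HasDerivAt (fun τ => ∫ s in (0:ℝ)..1, KelvinAux.Fm α φ c₀ τ s)
        (∫ s in (0:ℝ)..1, KelvinAux.Gm Uv α φ c₀ t s) t := by
    intro t
    obtain ⟨C, hC⟩ := IsCompact.exists_bound_of_continuousOn
      ((isCompact_Icc (a := t - 1) (b := t + 1)).prod (isCompact_Icc (a := (0:ℝ)) (b := 1)))
      hGcont.continuousOn
    have hsub : Set.uIoc (0:ℝ) 1 ⊆ Set.Icc 0 1 := by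
      rw [Set.uIoc_of_le zero_le_one]; exact Set.Ioc_subset_Icc_self
    have hbound : ∀ᵐ s ∂(volume : Measure ℝ), s ∈ Set.uIoc (0:ℝ) 1 →
        ∀ x ∈ Metric.ball t 1, ‖KelvinAux.Gm Uv α φ c₀ x s‖ ≤ C := by
      refine Filter.Eventually.of_forall fun s hs x hx => ?_
      refine hC (x, s) ⟨?_, hsub hs⟩
      rw [Real.ball_eq_Ioo] at hx
      exact Set.Ioo_subset_Icc_self hx
    have hdiff : ∀ᵐ s ∂(volume : Measure ℝ), s ∈ Set.uIoc (0:ℝ) 1 →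
        ∀ x ∈ Metric.ball t 1,
          HasDerivAt (fun τ => KelvinAux.Fm α φ c₀ τ s) (KelvinAux.Gm Uv α φ c₀ x s) x :=
      Filter.Eventually.of_forall fun s _ x _ => hFderiv s x
    have key := intervalIntegral.hasDerivAt_integral_of_dominated_loc_of_deriv_le
      (μ := (volume : Measure ℝ)) (F := fun τ s => KelvinAux.Fm α φ c₀ τ s)
      (F' := fun τ s => KelvinAux.Gm Uv α φ c₀ τ s) (x₀ := t) (a := 0) (b := 1)
      (bound := fun _ => C) (s := Metric.ball t 1) (Metric.ball_mem_nhds t one_pos)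
      (Filter.Eventually.of_forall fun x =>
        ((hFcont.comp (continuous_const.prodMk continuous_id)).aestronglyMeasurable))
      ((hFcont.comp (continuous_const.prodMk continuous_id)).intervalIntegrable 0 1)
      ((hGcont.comp (continuous_const.prodMk continuous_id)).aestronglyMeasurable)
      hbound intervalIntegrable_const hdiff
    exact key.2
  -- the stated integrand agrees with `Gm`
  have hGstat : ∀ (t s : ℝ),
      dot3
        (fun i : Fin 3 =>
          deriv (fun τ => α τ (φ t (c₀ s)) i) t
            + (∑ j, Uv t (φ t (c₀ s)) j * pd j (fun y => α t y i) (φ t (c₀ s)))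
            + (∑ j, α t (φ t (c₀ s)) j * pd i (fun y => Uv t y j) (φ t (c₀ s))))
        (deriv (fun r => φ t (c₀ r)) s) = KelvinAux.Gm Uv α φ c₀ t s := by
    intro t s
    rw [hderivB t s]
    have hT12 : ∀ i : Fin 3,
        fderiv ℝ (KelvinAux.Am α) (t, φ t (c₀ s)) (1, Uv t (φ t (c₀ s))) i
          = deriv (fun τ => α τ (φ t (c₀ s)) i) t
            + ∑ j, Uv t (φ t (c₀ s)) j * pd j (fun y => α t y i) (φ t (c₀ s)) :=
      fun i => KelvinAux.fderiv_time_apply hA t (φ t (c₀ s)) (Uv t (φ t (c₀ s))) i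
    -- mixed second derivative identity
    have e1 : HasDerivAt (fun r => fderiv ℝ (KelvinAux.Pm φ c₀) (t, r) (1, 0))
        (fderiv ℝ (fderiv ℝ (KelvinAux.Pm φ c₀)) (t, s) (0, 1) (1, 0)) s :=
      KelvinAux.hasDerivAt_fderiv_applied hP
        ((hasDerivAt_const s t).prodMk (hasDerivAt_id s)) (1, 0)
    have e2 : (fun r => fderiv ℝ (KelvinAux.Pm φ c₀) (t, r) (1, 0))
        = fun r => Uv t (φ t (c₀ r)) := by
      funext r
      have ha : HasDerivAt (fun σ => φ σ (c₀ r))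
          (fderiv ℝ (KelvinAux.Pm φ c₀) (t, r) (1, 0)) t :=
        KelvinAux.hasDerivAt_comp_line hP ((hasDerivAt_id t).prodMk (hasDerivAt_const t r))
      exact ha.unique (hflow t (c₀ r))
    have e3 : HasDerivAt (fun r => Uv t (φ t (c₀ r)))
        (fderiv ℝ (KelvinAux.Am Uv) (t, φ t (c₀ s))
          (0, fderiv ℝ (KelvinAux.Pm φ c₀) (t, s) (0, 1))) s :=
      KelvinAux.hasDerivAt_space_line hAU t (hvecB t s)
    have e4 : fderiv ℝ (fderiv ℝ (KelvinAux.Pm φ c₀)) (t, s) (0, 1) (1, 0)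
        = fderiv ℝ (KelvinAux.Am Uv) (t, φ t (c₀ s))
            (0, fderiv ℝ (KelvinAux.Pm φ c₀) (t, s) (0, 1)) := by
      rw [e2] at e1
      exact e1.unique e3
    have e5 : fderiv ℝ (fderiv ℝ (KelvinAux.Pm φ c₀)) (t, s) (1, 0) (0, 1)
        = fderiv ℝ (KelvinAux.Am Uv) (t, φ t (c₀ s))
            (0, fderiv ℝ (KelvinAux.Pm φ c₀) (t, s) (0, 1)) :=
      (KelvinAux.symm_second hP (t, s) (1, 0) (0, 1)).trans e4
    have hM : ∀ i : Fin 3,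
        fderiv ℝ (fderiv ℝ (KelvinAux.Pm φ c₀)) (t, s) (1, 0) (0, 1) i
          = ∑ j, fderiv ℝ (KelvinAux.Pm φ c₀) (t, s) (0, 1) j
              * pd j (fun y => Uv t y i) (φ t (c₀ s)) := by
      intro i
      rw [show fderiv ℝ (fderiv ℝ (KelvinAux.Pm φ c₀)) (t, s) (1, 0) (0, 1) i
          = fderiv ℝ (KelvinAux.Am Uv) (t, φ t (c₀ s))
              (0, fderiv ℝ (KelvinAux.Pm φ c₀) (t, s) (0, 1)) i from congrFun e5 i]
      rw [KelvinAux.clm_expand0]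
      refine Finset.sum_congr rfl fun j _ => ?_
      congr 1
      exact (KelvinAux.pd_space hAU t (φ t (c₀ s)) i j).symm
    -- numeric identity
    unfold KelvinAux.Gm
    simp only [dot3]
    rw [show (∑ i, α t (φ t (c₀ s)) i
          * fderiv ℝ (fderiv ℝ (KelvinAux.Pm φ c₀)) (t, s) (1, 0) (0, 1) i)
        = ∑ i, α t (φ t (c₀ s)) i
            * ∑ j, fderiv ℝ (KelvinAux.Pm φ c₀) (t, s) (0, 1) j
                * pd j (fun y => Uv t y i) (φ t (c₀ s)) from
      Finset.sum_congr rfl fun i _ => by rw [hM i]]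
    rw [show (∑ i, (deriv (fun τ => α τ (φ t (c₀ s)) i) t
            + (∑ j, Uv t (φ t (c₀ s)) j * pd j (fun y => α t y i) (φ t (c₀ s)))
            + (∑ j, α t (φ t (c₀ s)) j * pd i (fun y => Uv t y j) (φ t (c₀ s))))
          * fderiv ℝ (KelvinAux.Pm φ c₀) (t, s) (0, 1) i)
        = ∑ i, (fderiv ℝ (KelvinAux.Am α) (t, φ t (c₀ s)) (1, Uv t (φ t (c₀ s))) i
            + (∑ j, α t (φ t (c₀ s)) j * pd i (fun y => Uv t y j) (φ t (c₀ s))))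
          * fderiv ℝ (KelvinAux.Pm φ c₀) (t, s) (0, 1) i from
      Finset.sum_congr rfl fun i _ => by rw [hT12 i]]
    simp only [Fin.sum_univ_three]
    ring
  constructor
  · intro t
    have h1 : (fun τ => circInt α φ c₀ τ) = fun τ => ∫ s in (0:ℝ)..1, KelvinAux.Fm α φ c₀ τ s := by
      rw [show (fun τ => circInt α φ c₀ τ) = circInt α φ c₀ from rfl, hcirc_eq]
    rw [h1, intervalIntegral.integral_congr (fun s _ => hGstat t s)]
    exact hmain t
  · intro hgrad t₁ t₂
    have hzero : ∀ t : ℝ, (∫ s in (0:ℝ)..1, KelvinAux.Gm Uv α φ c₀ t s) = 0 := by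
      intro t
      have hGl : ∀ s : ℝ, KelvinAux.Gm Uv α φ c₀ t s
          = fderiv ℝ (KelvinAux.Lm lam) (t, φ t (c₀ s))
              (0, fderiv ℝ (KelvinAux.Pm φ c₀) (t, s) (0, 1)) := by
        intro s
        rw [← hGstat t s, hderivB t s]
        rw [KelvinAux.clm_expand0' (fderiv ℝ (KelvinAux.Lm lam) (t, φ t (c₀ s)))]
        simp only [dot3]
        refine Finset.sum_congr rfl fun i _ => ?_
        rw [hgrad t (φ t (c₀ s)) i]
        rw [show pd i (fun y => lam t y) (φ t (c₀ s))
            = fderiv ℝ (KelvinAux.Lm lam) (t, φ t (c₀ s)) (0, Pi.single i 1) from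
          KelvinAux.pd_space' hlam t (φ t (c₀ s)) i]
        ring
      have hld : ∀ s : ℝ, HasDerivAt (fun r => lam t (φ t (c₀ r)))
          (KelvinAux.Gm Uv α φ c₀ t s) s := by
        intro s
        rw [hGl s]
        exact KelvinAux.hasDerivAt_space_line' hlam t (hvecB t s)
      have hint : IntervalIntegrable (fun s => KelvinAux.Gm Uv α φ c₀ t s) volume 0 1 :=
        (hGcont.comp (continuous_const.prodMk continuous_id)).intervalIntegrable 0 1
      rw [intervalIntegral.integral_eq_sub_of_hasDerivAt (fun s _ => hld s) hint]
      have hc01 : c₀ (1:ℝ) = c₀ 0 := by simpa using hclosed 0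
      rw [hc01, sub_self]
    have hD : ∀ t : ℝ, HasDerivAt (circInt α φ c₀) 0 t := by
      intro t
      have h := hmain t
      rw [hzero t] at h
      rw [hcirc_eq]
      exact h
    exact is_const_of_deriv_eq_zero (fun t => (hD t).differentiableAt)
      (fun t => (hD t).deriv) t₁ t₂


end
end
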